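/- Let (X,d) be a metric space and μ a Borel measure on X. Assume: (1) there is a dense set E ⊆ X and for every x₀ ∈ X there exist r(x₀) > 0, c(x₀) > 0 with μ(B(p,r)) ≥ c(x₀)·r^N for all p ∈ E ∩ B(x₀, r(x₀)) and all r ∈ (0, r(x₀)); and (2) for every x₀ there is a function o(t) with limsup_{t→0⁺} o(t)/t = 0 such that r ↦ μ(B(r, x₀))/(r^N + o(r^N)) is monotone non-increasing on (0, r(x₀)). Then for every x ∈ X, liminf_{r→0⁺} μ(B(x,r))/r^N > 0. -/
import Mathlib


open Metric MeasureTheory Filter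

theorem stmt1 {X : Type*} [MetricSpace X] [MeasurableSpace X] [BorelSpace X]
    (μ : Measure X) (N : ℕ) (hN : 1 ≤ N) (E : Set X) (hE : Dense E)
    (h1 : ∀ x₀ : X, ∃ r₀ > (0 : ℝ), ∃ c > (0 : ℝ),
      (∀ p ∈ E ∩ ball x₀ r₀, ∀ r ∈ Set.Ioo (0:ℝ) r₀,
        ENNReal.ofReal (c * r ^ N) ≤ μ (ball p r)) ∧
      ∃ o : ℝ → ℝ,
        Filter.limsup (fun t => o t / t) (nhdsWithin 0 (Set.Ioi 0)) = 0 ∧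
        AntitoneOn (fun r => (μ (ball x₀ r)).toReal / (r ^ N + o (r ^ N)))
          (Set.Ioo 0 r₀)) :
    ∀ x : X, 0 < Filter.liminf
      (fun r : ℝ => μ (ball x r) / ENNReal.ofReal (r ^ N))
      (nhdsWithin 0 (Set.Ioi 0)) := by
  intro x
  obtain ⟨r₀, hr₀, c, hc, hball, _⟩ := h1 x
  have key : ∀ᶠ r in nhdsWithin (0:ℝ) (Set.Ioi 0),
      ENNReal.ofReal (c / 2 ^ N) ≤ μ (ball x r) / ENNReal.ofReal (r ^ N) := by
    filter_upwards [Ioo_mem_nhdsGT_of_mem (Set.mem_Ico.2 ⟨le_refl 0, hr₀⟩)] with r hr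
    obtain ⟨hr0, hrr₀⟩ := hr
    obtain ⟨p, hpE, hpball⟩ := hE.exists_mem_open isOpen_ball
      (nonempty_ball.2 (by positivity : (0:ℝ) < r/2))
    have hpx : dist p x < r/2 := mem_ball.1 hpball
    have hsub : ball p (r/2) ⊆ ball x r := by
      intro y hy
      have hy' : dist y p < r/2 := mem_ball.1 hy
      have : dist y x ≤ dist y p + dist p x := dist_triangle _ _ _
      exact mem_ball.2 (by linarith)
    have hpE' : p ∈ E ∩ ball x r₀ := ⟨hpE, mem_ball.2 (by linarith)⟩
    have hμ : ENNReal.ofReal (c * (r/2) ^ N) ≤ μ (ball x r) :=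
      (hball p hpE' (r/2) ⟨by positivity, by linarith⟩).trans (measure_mono hsub)
    have heq : c * (r/2) ^ N / r ^ N = c / 2 ^ N := by
      rw [div_pow]
      field_simp
    calc ENNReal.ofReal (c / 2 ^ N)
        = ENNReal.ofReal (c * (r/2) ^ N / r ^ N) := by rw [heq]
      _ = ENNReal.ofReal (c * (r/2) ^ N) / ENNReal.ofReal (r ^ N) :=
          ENNReal.ofReal_div_of_pos (by positivity)
      _ ≤ μ (ball x r) / ENNReal.ofReal (r ^ N) :=
          ENNReal.div_le_div_right hμ _
  calc (0 : ENNReal) < ENNReal.ofReal (c / 2 ^ N) := ENNReal.ofReal_pos.2 (by positivity)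
    _ ≤ _ := Filter.le_liminf_of_le (by isBoundedDefault) key
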